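/- For every infinite cardinal β, the topological power S^β of the Sierpiński space S is β-sequential: for any subset A of S^β, if A contains the limits of every α-indexed transfinite sequence of its elements for all infinite regular cardinals α ≤ β, then A is closed. -/

import Mathlib

open Filter Topology

universe u

/-- The two points of the Sierpiński space. -/
inductive SPt : Type
  | zero
  | one
deriving DecidableEq

/-- The Sierpiński topology: `{zero}` is open, `{one}` is not. -/
instance : TopologicalSpace SPt := TopologicalSpace.generateFrom {{SPt.zero}}

/-- `A` is closed under limits of `o`-indexed transfinite sequences for all infinite
ordinals `o ≤ β` (β an infinite cardinal, viewed as an ordinal). -/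
def OrdSeqClosed {X : Type u} [TopologicalSpace X] (β : Cardinal.{u}) (A : Set X) : Prop :=
  ∀ o : Ordinal.{u}, Ordinal.omega0 ≤ o → o ≤ β.ord →
    ∀ f : o.ToType → X, (∀ i, f i ∈ A) →
    ∀ x : X, Filter.Tendsto f Filter.atTop (nhds x) → x ∈ A

/-- A space is β-sequential if every such subset is closed. -/
def IsBetaSequential (X : Type u) [TopologicalSpace X] (β : Cardinal.{u}) : Prop :=
  ∀ A : Set X, OrdSeqClosed β A → IsClosed A

/-- `A` contains limits of all convergent transfinite sequences of its points. -/
def TransSeqClosed {X : Type u} [TopologicalSpace X] (A : Set X) : Prop :=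
  ∀ o : Ordinal.{u}, Ordinal.omega0 ≤ o →
    ∀ f : o.ToType → X, (∀ i, f i ∈ A) →
    ∀ x : X, Filter.Tendsto f Filter.atTop (nhds x) → x ∈ A

/-- Pseudoradial space. -/
def IsPseudoradial (X : Type u) [TopologicalSpace X] : Prop :=
  ∀ A : Set X, TransSeqClosed A → IsClosed A

/-!
Induct on the number of zero coordinates of a point `x` of the closure of `A`. If `x` has finitely
many zeros, the basic open set of points vanishing wherever `x` does meets `A` in some `a`, and the
constant sequence at `a` converges to `x`. If the zero set `Z` of `x` is infinite, it is the
increasing union of `cof |Z|` subsets of size `< |Z|`. The points whose zero sets are these subsets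
specialize from `x`, so they lie in the closure of `A`, hence in `A` by induction, and they form a
`cof |Z|`-sequence converging to `x`. Finally `cof |Z|` is a regular cardinal `≤ β`.
-/

open Cardinal Set

namespace SPt

lemma isOpen_zero : IsOpen ({zero} : Set SPt) :=
  TopologicalSpace.isOpen_generateFrom_of_mem rfl

lemma nhds_zero : 𝓝 zero = pure zero := by
  simp [TopologicalSpace.nhds_generateFrom, and_comm (a := zero ∈ _), iInf_and]

lemma nhds_one : 𝓝 one = ⊤ := by
  simp only [TopologicalSpace.nhds_generateFrom, mem_singleton_iff, mem_ofPred_eq, iInf_eq_top,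
    and_imp]
  rintro _ hone rfl
  cases hone

lemma specializes_iff {a b : SPt} : a ⤳ b ↔ (b = zero → a = zero) := by
  cases a <;> cases b <;> simp [specializes_iff_pure, nhds_zero, nhds_one]

lemma pi_specializes_iff {κ : Type*} {x y : κ → SPt} :
    x ⤳ y ↔ y ⁻¹' {zero} ⊆ x ⁻¹' {zero} := by
  simp only [specializes_pi, specializes_iff, subset_def, mem_preimage, mem_singleton_iff]

lemma tendsto_pi_nhds_iff {ι κ : Type*} {l : Filter ι} {f : ι → κ → SPt} {x : κ → SPt} :
    Tendsto f l (𝓝 x) ↔ ∀ j, x j = zero → ∀ᶠ i in l, f i j = zero := by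
  refine tendsto_pi_nhds.trans (forall_congr' fun j => ?_)
  cases x j <;> simp [nhds_zero, nhds_one]

open Classical in
noncomputable def ofSet {κ : Type*} (s : Set κ) : κ → SPt :=
  fun j => if j ∈ s then zero else one

@[simp]
lemma ofSet_eq_zero {κ : Type*} {s : Set κ} {j : κ} : ofSet s j = zero ↔ j ∈ s := by
  simp [ofSet]

lemma ofSet_preimage_zero {κ : Type*} (s : Set κ) : ofSet s ⁻¹' {zero} = s := by
  ext; simp

end SPt

theorem Ordinal.exists_tendsto_atTop_toType_cof (o : Ordinal.{u}) :
    ∃ g : o.cof.ord.ToType → o.ToType, Tendsto g atTop atTop := by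
  obtain ⟨f, hf⟩ := exists_isFundamentalSeq (o := o) rfl
  have hf_tendsto : Tendsto f atTop atTop :=
    tendsto_atTop_atTop_of_monotone hf.strictMono.monotone fun b =>
      let ⟨_, ⟨i, hi⟩, hb⟩ := hf.isCofinal_range b
      ⟨i, hi ▸ hb⟩
  exact ⟨ToType.mk ∘ f ∘ ToType.mk.symm,
    ToType.mk.tendsto_atTop.comp (hf_tendsto.comp ToType.mk.symm.tendsto_atTop)⟩

theorem exists_subsets_mk_lt_eventually_mem {κ : Type u} (s : Set κ) (hs : ℵ₀ ≤ #s) :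
    ∃ S : (#s).ord.cof.ord.ToType → Set κ,
      (∀ i, S i ⊆ s ∧ #(S i) < #s) ∧ ∀ j ∈ s, ∀ᶠ i in atTop, j ∈ S i := by
  have e : s ≃ (#s).ord.ToType := Classical.choice (Cardinal.eq.mp (mk_ord_toType _).symm)
  obtain ⟨g, hg⟩ := Ordinal.exists_tendsto_atTop_toType_cof (#s).ord
  have := noMaxOrder hs
  refine ⟨fun i => Subtype.val '' (e ⁻¹' Iio (g i)), fun i => ⟨Subtype.coe_image_subset _ _, ?_⟩,
    fun j hj => (hg.eventually_gt_atTop (e ⟨j, hj⟩)).mono fun i hi => ⟨⟨j, hj⟩, hi, rfl⟩⟩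
  calc #(Subtype.val '' (e ⁻¹' Iio (g i))) ≤ #(e ⁻¹' Iio (g i)) := mk_image_le
    _ = #(Iio (g i)) := mk_preimage_equiv e _
    _ < #(#s).ord.ToType := mk_Iio_lt _ (by simp)
    _ = #s := mk_ord_toType _

def RegularSeqClosed {X : Type u} [TopologicalSpace X] (β : Cardinal.{u}) (A : Set X) : Prop :=
  ∀ α : Cardinal.{u}, ℵ₀ ≤ α → α.IsRegular → α ≤ β →
    ∀ f : α.ord.ToType → X, (∀ i, f i ∈ A) → ∀ x, Tendsto f atTop (𝓝 x) → x ∈ A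

section
variable {κ : Type u} {β : Cardinal.{u}} {A : Set (κ → SPt)} {x : κ → SPt}

theorem mem_of_mem_closure_of_finite_zero (hβ : ℵ₀ ≤ β) (hA : RegularSeqClosed β A)
    (hx : x ∈ closure A) (hfin : (x ⁻¹' {SPt.zero}).Finite) : x ∈ A := by
  have hU : IsOpen (⋂ j ∈ x ⁻¹' {SPt.zero}, (fun y : κ → SPt => y j) ⁻¹' {SPt.zero}) :=
    hfin.isOpen_biInter fun j _ => SPt.isOpen_zero.preimage (continuous_apply j)
  obtain ⟨a, haU, haA⟩ := mem_closure_iff.mp hx _ hU (mem_iInter₂.mpr fun j hj => hj)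
  have hax : a ⤳ x := SPt.pi_specializes_iff.2 fun j hj => mem_iInter₂.mp haU j hj
  exact hA ℵ₀ le_rfl isRegular_aleph0 hβ (fun _ => a) (fun _ => haA) x
    (tendsto_const_nhds.mono_right hax.nhds_le_nhds)

theorem mem_of_mem_closure_of_infinite_zero (hκ : #κ ≤ β) (hA : RegularSeqClosed β A)
    (hx : x ∈ closure A) (hinf : ℵ₀ ≤ #(x ⁻¹' {SPt.zero}))
    (ih : ∀ y ∈ closure A, #(y ⁻¹' {SPt.zero}) < #(x ⁻¹' {SPt.zero}) → y ∈ A) : x ∈ A := by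
  set μ := #(x ⁻¹' {SPt.zero})
  obtain ⟨S, hS, hS_eventually⟩ := exists_subsets_mk_lt_eventually_mem _ hinf
  have hreg : μ.ord.cof.IsRegular := isRegular_cof (isSuccLimit_ord hinf)
  have hcof : μ.ord.cof ≤ β := (Ordinal.cof_ord_le μ).trans ((mk_set_le _).trans hκ)
  refine hA _ hreg.aleph0_le hreg hcof (fun i => SPt.ofSet (S i)) (fun i => ih _ ?_ ?_) x ?_
  · have hx_specializes : x ⤳ SPt.ofSet (S i) :=
      SPt.pi_specializes_iff.2 ((SPt.ofSet_preimage_zero _).trans_subset (hS i).1)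
    exact hx_specializes.mem_closed isClosed_closure hx
  · exact (SPt.ofSet_preimage_zero _).symm ▸ (hS i).2
  · exact SPt.tendsto_pi_nhds_iff.2 fun j hj =>
      (hS_eventually j hj).mono fun i hi => SPt.ofSet_eq_zero.2 hi

theorem isClosed_of_regularSeqClosed (hβ : ℵ₀ ≤ β) (hκ : #κ ≤ β) (hA : RegularSeqClosed β A) :
    IsClosed A := by
  refine isClosed_of_closure_subset fun x hx => ?_
  induction hc : #(x ⁻¹' {SPt.zero}) using WellFoundedLT.induction generalizing x with
  | _ c ih =>
    rcases lt_or_ge #(x ⁻¹' {SPt.zero}) ℵ₀ with hfin | hinf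
    · exact mem_of_mem_closure_of_finite_zero hβ hA hx (lt_aleph0_iff_set_finite.mp hfin)
    · exact mem_of_mem_closure_of_infinite_zero hκ hA hx hinf fun y hy hlt =>
        ih _ (hc ▸ hlt) y hy rfl

end

/-- For every infinite cardinal β, `S^β` is β-sequential (with the closure
condition stated for all infinite regular cardinals α ≤ β). -/
theorem sierpinski_power_beta_sequential (β : Cardinal.{u}) (hβ : Cardinal.aleph0 ≤ β) :
    ∀ A : Set (β.ord.ToType → SPt),
      (∀ α : Cardinal.{u}, Cardinal.aleph0 ≤ α → α.IsRegular → α ≤ β →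
        ∀ f : α.ord.ToType → (β.ord.ToType → SPt), (∀ i, f i ∈ A) →
        ∀ x, Filter.Tendsto f Filter.atTop (nhds x) → x ∈ A) →
      IsClosed A :=
  fun _ hA => isClosed_of_regularSeqClosed hβ (mk_ord_toType β).le hA
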